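/- arXiv:1009.2201 — 9 statements merged into one kernel-verified Lean document; each statement's English description precedes it below -/
import Mathlib

section
/- Let k be a commutative ring in which 2 is invertible, A a commutative k-algebra, λ an element of k, Ω̄ an A-module, d̄ : A → Ω̄ a k-linear derivation (d̄(fg) = f·d̄g + g·d̄f for all f,g ∈ A), ⟨·,·⟩ : Ω̄ × Ω̄ → A an A-bilinear map, and Δ̄ : A → A a k-linear map satisfying the polarization identity Δ̄(fg) = (Δ̄f)·g + f·(Δ̄g) + 2⟨d̄f, d̄g⟩ for all f,g ∈ A. On Ω := Ω̄ × A define a left action f ▷ (ω,a) := (f·ω, f·a) and a right action (ω,a) ◁ f := (ω·f, a·f + λ·⟨ω, d̄f⟩). Then: (i) ◁ is a unital, associative right A-action, i.e. ((ω,a) ◁ f) ◁ g = (ω,a) ◁ (fg); (ii) the left and right actions commute, (f ▷ (ω,a)) ◁ g = f ▷ ((ω,a) ◁ g), so Ω is an (A,A)-bimodule; and (iii) the map d : A → Ω, d f := (d̄f, (λ/2)·Δ̄f), obeys the Leibniz rule d(fg) = (d f) ◁ g + f ▷ (d g) for all f,g ∈ A. -/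
/- Lemma 2.1 of the paper: the extended noncommutative first-order differential
calculus Ω¹ = Ω̄¹ ⊕ A·θ′, represented as pairs (ω, a) ∈ Ω̄ × A. -/

section

variable {k A Ω : Type*} [CommRing k] [CommRing A] [Algebra k A]
  [AddCommGroup Ω] [Module k Ω] [Module A Ω]

/-- The right action `(ω,a) ◁ f := (ω·f, a·f + λ·⟨ω, d̄f⟩)`. -/
def rAct (lam : k) (B : Ω →ₗ[A] Ω →ₗ[A] A) (dbar : A →ₗ[k] Ω)
    (p : Ω × A) (f : A) : Ω × A :=
  (f • p.1, p.2 * f + lam • B p.1 (dbar f))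

/-- The left action `f ▷ (ω,a) := (f·ω, f·a)`. -/
def lAct (f : A) (p : Ω × A) : Ω × A := (f • p.1, f * p.2)

/-- The quantum differential `d f := (d̄f, (λ/2)·Δ̄f)`. -/
def dQ [Invertible (2 : k)] (lam : k) (dbar : A →ₗ[k] Ω) (Δ : A →ₗ[k] A)
    (f : A) : Ω × A :=
  (dbar f, (⅟(2 : k) * lam) • Δ f)

variable {lam : k} {B : Ω →ₗ[A] Ω →ₗ[A] A} {dbar : A →ₗ[k] Ω}

theorem rAct_lAct (f : A) (p : Ω × A) (g : A) :
    rAct lam B dbar (lAct f p) g = lAct f (rAct lam B dbar p g) := by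
  simp only [rAct, lAct, map_smul, LinearMap.smul_apply, smul_eq_mul, Prod.mk.injEq]
  refine ⟨smul_comm g f p.1, ?_⟩
  rw [mul_add, mul_assoc, mul_smul_comm]

/- The correction term `λ⟨ω, d̄(fg)⟩` of the right action splits by the Leibniz rule into the
correction terms of the two successive actions. -/
theorem rAct_rAct (hder : ∀ f g : A, dbar (f * g) = f • dbar g + g • dbar f)
    (p : Ω × A) (f g : A) :
    rAct lam B dbar (rAct lam B dbar p f) g = rAct lam B dbar p (f * g) := by
  simp only [rAct, hder f g, map_add, map_smul, LinearMap.smul_apply, smul_eq_mul,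
    Prod.mk.injEq]
  refine ⟨by rw [smul_smul, mul_comm], ?_⟩
  simp only [Algebra.smul_def]
  ring

theorem rAct_one (hder : ∀ f g : A, dbar (f * g) = f • dbar g + g • dbar f) (p : Ω × A) :
    rAct lam B dbar p 1 = p := by
  have hd1 : dbar 1 = 0 := (Derivation.mk' dbar hder).map_one_eq_zero
  simp [rAct, hd1]

theorem invOf_two_mul_smul_two_mul [Invertible (2 : k)] (c : k) (a : A) :
    (⅟(2 : k) * c) • (2 * a) = c • a := by
  rw [two_mul, ← two_smul k a, smul_smul, mul_right_comm, invOf_mul_self, one_mul]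

/- The factor `2` of the polarization identity cancels `⅟2`, leaving exactly the correction
term `λ⟨d̄f, d̄g⟩` of the right action on `d f`. -/
theorem dQ_mul [Invertible (2 : k)] {Δ : A →ₗ[k] A}
    (hder : ∀ f g : A, dbar (f * g) = f • dbar g + g • dbar f)
    (hpol : ∀ f g : A, Δ (f * g) = Δ f * g + f * Δ g + 2 * B (dbar f) (dbar g)) (f g : A) :
    dQ lam dbar Δ (f * g) = rAct lam B dbar (dQ lam dbar Δ f) g + lAct f (dQ lam dbar Δ g) := by
  simp only [dQ, rAct, lAct, Prod.mk_add_mk, Prod.mk.injEq]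
  refine ⟨by rw [hder, add_comm], ?_⟩
  rw [hpol, smul_add, smul_add, invOf_two_mul_smul_two_mul, smul_mul_assoc, mul_smul_comm]
  abel

theorem extended_calculus_bimodule_and_leibniz [Invertible (2 : k)] (lam : k)
    (dbar : A →ₗ[k] Ω)
    (hder : ∀ f g : A, dbar (f * g) = f • dbar g + g • dbar f)
    (B : Ω →ₗ[A] Ω →ₗ[A] A) (Δ : A →ₗ[k] A)
    (hpol : ∀ f g : A, Δ (f * g) = Δ f * g + f * Δ g + 2 * B (dbar f) (dbar g)) :
    -- (i) ◁ is a unital associative right action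
    (∀ (p : Ω × A) (f g : A),
      rAct lam B dbar (rAct lam B dbar p f) g = rAct lam B dbar p (f * g)) ∧
    (∀ p : Ω × A, rAct lam B dbar p 1 = p) ∧
    -- (ii) the left and right actions commute (bimodule property)
    (∀ (f : A) (p : Ω × A) (g : A),
      rAct lam B dbar (lAct f p) g = lAct f (rAct lam B dbar p g)) ∧
    -- (iii) Leibniz rule for d
    (∀ f g : A,
      dQ lam dbar Δ (f * g)
        = rAct lam B dbar (dQ lam dbar Δ f) g + lAct f (dQ lam dbar Δ g)) :=
  ⟨rAct_rAct hder, rAct_one hder, rAct_lAct, dQ_mul hder hpol⟩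

end
end

section
/- Let n ≥ 1, let τ : ℝⁿ → ℝⁿ be a C² vector field and α : ℝⁿ → ℝ a C¹ function such that ∂ᵢτⱼ(x) + ∂ⱼτᵢ(x) = (1 + α(x))·δᵢⱼ for all x ∈ ℝⁿ and all i,j. Then for every C³ function f : ℝⁿ → ℝ and every x ∈ ℝⁿ: Δ(τ·∇f) − τ·∇(Δf) = (1 + α)·Δf − ((n−2)/2)·⟨∇α, ∇f⟩, where Δh := Σᵢ ∂ᵢ²h is the Euclidean Laplacian, τ·∇h := Σⱼ τⱼ ∂ⱼh, and ⟨∇α, ∇f⟩ := Σᵢ (∂ᵢα)(∂ᵢf). -/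
/-! By the product rule, `Δ(τⱼ ∂ⱼf) = Δτⱼ ∂ⱼf + 2 ∑ᵢ ∂ᵢτⱼ ∂ᵢ∂ⱼf + τⱼ ∂ⱼΔf`, and the last terms
cancel against `τ·∇(Δf)`. Since the Hessian of `f` is symmetric, the middle sum only sees the
symmetric part `∂ᵢτⱼ + ∂ⱼτᵢ = (1 + α) δᵢⱼ` and equals `(1 + α) Δf`. Differentiating the conformal
Killing equation once more gives `∂ᵢ∂ᵢτⱼ = ∂ᵢα δᵢⱼ - ∂ⱼ∂ᵢτᵢ` with `∂ᵢτᵢ = (1 + α) / 2`, hence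
`Δτⱼ = (1 - n / 2) ∂ⱼα`, which produces the gradient term. -/

/-- Partial derivative in the `i`-th coordinate direction on `Fin n → ℝ`. -/
noncomputable def pd {n : ℕ} (i : Fin n) (h : (Fin n → ℝ) → ℝ) :
    (Fin n → ℝ) → ℝ :=
  fun x => fderiv ℝ h x (Pi.single i 1)

/-- Euclidean Laplacian on `Fin n → ℝ`. -/
noncomputable def lap {n : ℕ} (h : (Fin n → ℝ) → ℝ) : (Fin n → ℝ) → ℝ :=
  fun x => ∑ i, pd i (pd i h) x

open Finset

variable {n : ℕ}

def IsConformalKilling (τ : (Fin n → ℝ) → Fin n → ℝ) (α : (Fin n → ℝ) → ℝ) : Prop :=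
  ∀ (x : Fin n → ℝ) (i j : Fin n),
    pd i (fun y => τ y j) x + pd j (fun y => τ y i) x = (1 + α x) * (if i = j then 1 else 0)

lemma ContDiff.pd {k : ℕ} {h : (Fin n → ℝ) → ℝ} (hh : ContDiff ℝ (k + 1) h) (i : Fin n) :
    ContDiff ℝ k (pd i h) :=
  (hh.fderiv_right le_rfl).clm_apply contDiff_const

section PartialDerivative

variable {u v : (Fin n → ℝ) → ℝ} (i : Fin n) (x : Fin n → ℝ)

lemma pd_sum {ι : Type*} (s : Finset ι) (g : ι → (Fin n → ℝ) → ℝ)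
    (hg : ∀ j ∈ s, DifferentiableAt ℝ (g j) x) :
    pd i (fun y => ∑ j ∈ s, g j y) x = ∑ j ∈ s, pd i (g j) x := by
  simp [pd, fderiv_fun_sum hg]

lemma pd_add (hu : DifferentiableAt ℝ u x) (hv : DifferentiableAt ℝ v x) :
    pd i (fun y => u y + v y) x = pd i u x + pd i v x := by
  simp [pd, fderiv_fun_add hu hv]

lemma pd_mul (hu : DifferentiableAt ℝ u x) (hv : DifferentiableAt ℝ v x) :
    pd i (fun y => u y * v y) x = pd i u x * v x + u x * pd i v x := by
  simp only [pd, fderiv_fun_mul hu hv, add_apply, smul_apply, smul_eq_mul]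
  ring

lemma pd_const_add_mul_const (c d : ℝ) (hu : DifferentiableAt ℝ u x) :
    pd i (fun y => (c + u y) * d) x = pd i u x * d := by
  unfold pd
  rw [fderiv_mul_const (hu.const_add c), fderiv_const_add]
  simp [mul_comm]

lemma pd_comm (hu : ContDiff ℝ 2 u) (j : Fin n) : pd i (pd j u) x = pd j (pd i u) x := by
  have hsymm : IsSymmSndFDerivAt ℝ u x :=
    hu.contDiffAt.isSymmSndFDerivAt (by simp [minSmoothness_of_isRCLikeNormedField])
  have hd : DifferentiableAt ℝ (fderiv ℝ u) x :=
    (hu.fderiv_right (m := 1) (by norm_num)).differentiable one_ne_zero x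
  have hpd_pd : ∀ a b : Fin n,
      pd a (pd b u) x = fderiv ℝ (fderiv ℝ u) x (Pi.single a 1) (Pi.single b 1) := by
    intro a b
    unfold pd
    rw [fderiv_clm_apply hd (differentiableAt_const _)]
    simp
  rw [hpd_pd, hpd_pd, hsymm.eq]

end PartialDerivative

section Laplacian

variable {u v : (Fin n → ℝ) → ℝ} (x : Fin n → ℝ)

lemma lap_sum {ι : Type*} (s : Finset ι) (g : ι → (Fin n → ℝ) → ℝ)
    (hg : ∀ j ∈ s, ContDiff ℝ 2 (g j)) :
    lap (fun y => ∑ j ∈ s, g j y) x = ∑ j ∈ s, lap (g j) x := by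
  have hpd : ∀ i, pd i (fun y => ∑ j ∈ s, g j y) = fun y => ∑ j ∈ s, pd i (g j) y :=
    fun i => funext fun y =>
      pd_sum i y s g fun j hj => ((hg j hj).differentiable (by norm_num)) y
  simp only [lap, hpd]
  rw [sum_comm]
  refine sum_congr rfl fun i _ => pd_sum i x s _ fun j hj => ?_
  exact ((hg j hj).pd (k := 1) i).differentiable one_ne_zero x

lemma lap_mul (hu : ContDiff ℝ 2 u) (hv : ContDiff ℝ 2 v) :
    lap (fun y => u y * v y) x
      = lap u x * v x + 2 * ∑ i, pd i u x * pd i v x + u x * lap v x := by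
  have du : Differentiable ℝ u := hu.differentiable (by norm_num)
  have dv : Differentiable ℝ v := hv.differentiable (by norm_num)
  have dpu : ∀ i, Differentiable ℝ (pd i u) := fun i =>
    (hu.pd (k := 1) i).differentiable one_ne_zero
  have dpv : ∀ i, Differentiable ℝ (pd i v) := fun i =>
    (hv.pd (k := 1) i).differentiable one_ne_zero
  have hpd : ∀ i, pd i (fun y => u y * v y) = fun y => pd i u y * v y + u y * pd i v y :=
    fun i => funext fun y => pd_mul i y (du y) (dv y)
  calc lap (fun y => u y * v y) x
      = ∑ i, (pd i (pd i u) x * v x + 2 * (pd i u x * pd i v x) + u x * pd i (pd i v) x) := by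
        refine sum_congr rfl fun i _ => ?_
        rw [hpd, pd_add i x ((dpu i x).fun_mul (dv x)) ((du x).fun_mul (dpv i x)),
          pd_mul i x (dpu i x) (dv x), pd_mul i x (du x) (dpv i x)]
        ring
    _ = _ := by simp only [lap, sum_add_distrib, ← sum_mul, ← mul_sum]

lemma pd_lap {f : (Fin n → ℝ) → ℝ} (hf : ContDiff ℝ 3 f) (j : Fin n) :
    pd j (lap f) x = lap (pd j f) x := by
  have hf2 : ContDiff ℝ 2 f := hf.of_le (by norm_num)
  have hpd_pd : ∀ i, ContDiff ℝ 2 (pd i f) := fun i => hf.pd (k := 2) i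
  unfold lap
  rw [pd_sum j x _ _ fun i _ => ((hpd_pd i).pd (k := 1) i).differentiable one_ne_zero x]
  refine sum_congr rfl fun i _ => ?_
  rw [pd_comm j x (hpd_pd i), funext fun y => pd_comm j y hf2 i]

end Laplacian

namespace IsConformalKilling

variable {τ : (Fin n → ℝ) → Fin n → ℝ} {α : (Fin n → ℝ) → ℝ} (x : Fin n → ℝ)

lemma pd_pd_add_pd_pd (hCK : IsConformalKilling τ α) (hτ : ContDiff ℝ 2 τ)
    (hα : Differentiable ℝ α) (i j k : Fin n) :
    pd k (pd i (fun y => τ y j)) x + pd k (pd j (fun y => τ y i)) x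
      = pd k α x * (if i = j then 1 else 0) := by
  have hpd : ∀ a b, Differentiable ℝ (pd a (fun y => τ y b)) := fun a b =>
    ((contDiff_pi.mp hτ b).pd (k := 1) a).differentiable one_ne_zero
  rw [← pd_add k x (hpd i j x) (hpd j i x), funext (hCK · i j)]
  exact pd_const_add_mul_const k x 1 _ (hα x)

lemma lap_component (hCK : IsConformalKilling τ α) (hτ : ContDiff ℝ 2 τ)
    (hα : Differentiable ℝ α) (j : Fin n) :
    lap (fun y => τ y j) x = (1 - n / 2) * pd j α x := by
  have hpd_div : ∀ i, pd j (pd i (fun y => τ y i)) x = pd j α x / 2 := fun i => by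
    have := hCK.pd_pd_add_pd_pd x hτ hα i i j
    rw [if_pos rfl] at this
    linarith
  have hterm : ∀ i, pd i (pd i (fun y => τ y j)) x
      = pd i α x * (if i = j then 1 else 0) - pd j α x / 2 := fun i => by
    have := hCK.pd_pd_add_pd_pd x hτ hα i j i
    rw [pd_comm i x (contDiff_pi.mp hτ i), hpd_div] at this
    linarith
  simp only [lap, hterm, mul_ite, mul_one, mul_zero, sum_sub_distrib, sum_ite_eq', mem_univ,
    if_true, sum_const, card_univ, Fintype.card_fin, nsmul_eq_mul]
  ring

lemma sum_sum_pd_mul_pd_pd (hCK : IsConformalKilling τ α) {f : (Fin n → ℝ) → ℝ}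
    (hf : ContDiff ℝ 2 f) :
    ∑ j, ∑ i, pd i (fun y => τ y j) x * pd i (pd j f) x = (1 + α x) / 2 * lap f x := by
  have hswap : ∑ j, ∑ i, pd i (fun y => τ y j) x * pd i (pd j f) x
      = ∑ j, ∑ i, pd j (fun y => τ y i) x * pd i (pd j f) x := by
    rw [sum_comm]
    exact sum_congr rfl fun i _ => sum_congr rfl fun j _ => by rw [pd_comm j x hf i]
  have hsymm : 2 * ∑ j, ∑ i, pd i (fun y => τ y j) x * pd i (pd j f) x
      = (1 + α x) * lap f x := by
    calc _ = ∑ j, ∑ i,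
          (pd i (fun y => τ y j) x + pd j (fun y => τ y i) x) * pd i (pd j f) x := by
          rw [two_mul]
          nth_rewrite 2 [hswap]
          simp only [add_mul, sum_add_distrib]
      _ = ∑ j, ∑ i, (1 + α x) * (if i = j then 1 else 0) * pd i (pd j f) x := by
          simp only [hCK x]
      _ = (1 + α x) * lap f x := by simp [lap, mul_sum]
  linarith

end IsConformalKilling

theorem laplacian_conformal_killing_commutator_general (n : ℕ)
    (τ : (Fin n → ℝ) → Fin n → ℝ) (α : (Fin n → ℝ) → ℝ)
    (hτ : ContDiff ℝ 2 τ) (hα : ContDiff ℝ 1 α)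
    (hCK : ∀ (x : Fin n → ℝ) (i j : Fin n),
      pd i (fun y => τ y j) x + pd j (fun y => τ y i) x
        = (1 + α x) * (if i = j then 1 else 0))
    (f : (Fin n → ℝ) → ℝ) (hf : ContDiff ℝ 3 f) (x : Fin n → ℝ) :
    lap (fun y => ∑ j, τ y j * pd j f y) x - ∑ j, τ x j * pd j (lap f) x
      = (1 + α x) * lap f x - (((n : ℝ) - 2) / 2) * ∑ i, pd i α x * pd i f x := by
  have hCK : IsConformalKilling τ α := hCK
  have hα : Differentiable ℝ α := hα.differentiable one_ne_zero
  have hτj : ∀ j, ContDiff ℝ 2 (fun y => τ y j) := contDiff_pi.mp hτ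
  have hpd : ∀ j, ContDiff ℝ 2 (pd j f) := fun j => hf.pd (k := 2) j
  rw [lap_sum x _ _ fun j _ => (hτj j).mul (hpd j)]
  simp only [lap_mul x (hτj _) (hpd _), pd_lap x hf, hCK.lap_component x hτ hα, sum_add_distrib,
    mul_assoc, ← mul_sum, hCK.sum_sum_pd_mul_pd_pd x (hf.of_le (by norm_num))]
  ring

theorem laplacian_conformal_killing_commutator (n : ℕ) (hn : 1 ≤ n)
    (τ : (Fin n → ℝ) → Fin n → ℝ) (α : (Fin n → ℝ) → ℝ)
    (hτ : ContDiff ℝ 2 τ) (hα : ContDiff ℝ 1 α)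
    (hCK : ∀ (x : Fin n → ℝ) (i j : Fin n),
      pd i (fun y => τ y j) x + pd j (fun y => τ y i) x
        = (1 + α x) * (if i = j then 1 else 0))
    (f : (Fin n → ℝ) → ℝ) (hf : ContDiff ℝ 3 f) (x : Fin n → ℝ) :
    lap (fun y => ∑ j, τ y j * pd j f y) x - ∑ j, τ x j * pd j (lap f) x
      = (1 + α x) * lap f x - (((n : ℝ) - 2) / 2) * ∑ i, pd i α x * pd i f x :=
  laplacian_conformal_killing_commutator_general n τ α hτ hα hCK f hf x
end

section
/- Let k be a commutative ring, A a commutative k-algebra, τ : A → A a k-linear derivation, λ ∈ k, R an associative unital k-algebra, i : A → R a k-algebra homomorphism, and t ∈ R an element satisfying the commutation relation i(f)·t = t·i(f) + λ·i(τ(f)) for all f ∈ A. Let α, β, μ ∈ A with μ invertible in A and τ(μ) = β − (1+α)·μ. Define, for n ≥ 0, qₙ := i(μ)·((t + λ·i(α))ⁿ − (t − λ·i(β·μ⁻¹ − α))ⁿ) ∈ R. Then q₀ = 0, q₁ = λ·i(β), and for all n ≥ 1: qₙ = (t − λ·1)·qₙ₋₁ + λ·i(β)·(t + λ·i(α))ⁿ⁻¹.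 -/
/- The closed form of [dt, tⁿ] (equation (3.3)) from the proof of Proposition 3.3:
in the cross product algebra with relation i(f)·t = t·i(f) + λ·i(τ(f)), the
elements qₙ := i(μ)·((t + λ·i(α))ⁿ − (t − λ·i(βμ⁻¹ − α))ⁿ) satisfy the recursion
qₙ = (t − λ)·qₙ₋₁ + λ·i(β)·(t + λ·i(α))ⁿ⁻¹ with q₀ = 0 and q₁ = λ·i(β). -/

theorem cross_product_dt_tn_recursion {k A R : Type*} [CommRing k] [CommRing A]
    [Algebra k A] [Ring R] [Algebra k R]
    (τ : A →ₗ[k] A) (hτ : ∀ f g : A, τ (f * g) = f * τ g + g * τ f)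
    (lam : k) (i : A →ₐ[k] R) (t : R)
    (hcomm : ∀ f : A, i f * t = t * i f + lam • i (τ f))
    (α β μ : A) [Invertible μ] (hμ : τ μ = β - (1 + α) * μ) :
    let q : ℕ → R := fun n =>
      i μ * ((t + lam • i α) ^ n - (t - lam • i (β * ⅟μ - α)) ^ n)
    q 0 = 0 ∧ q 1 = lam • i β ∧
      ∀ n : ℕ, 1 ≤ n →
        q n = (t - lam • (1 : R)) * q (n - 1)
          + lam • i β * (t + lam • i α) ^ (n - 1) := by
  intro q
  have hbμ : μ * (β * ⅟μ - α) = β - μ * α := by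
    have h1 : μ * (β * ⅟μ) = β * (μ * ⅟μ) := by ring
    rw [mul_sub, h1, mul_invOf_self, mul_one]
  have htμ : t * i μ = i μ * t - lam • i (τ μ) :=
    eq_sub_iff_add_eq.mpr (hcomm μ).symm
  have hτμ : i (τ μ) = i β - i μ - i μ * i α := by
    rw [hμ]
    rw [show β - (1 + α) * μ = β - μ - μ * α by ring]
    simp [map_sub, map_mul, sub_sub]
  have h1 : (t - lam • (1 : R)) * i μ
      = i μ * (t + lam • i α) - lam • i β := by
    rw [sub_mul, htμ, hτμ, mul_add, smul_mul_assoc, one_mul, mul_smul_comm, ← map_mul]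
    rw [smul_sub, smul_sub]
    abel
  have h2 : (t - lam • (1 : R)) * i μ
      = i μ * (t - lam • i (β * ⅟μ - α)) := by
    rw [sub_mul, htμ, hτμ, mul_sub, smul_mul_assoc, one_mul, mul_smul_comm,
      show i μ * i (β * ⅟μ - α) = i (β - μ * α) by rw [← map_mul, hbμ],
      map_sub, map_mul, smul_sub, smul_sub, smul_sub]
    abel
  refine ⟨by simp [q], ?_, ?_⟩
  · show i μ * ((t + lam • i α) ^ 1 - (t - lam • i (β * ⅟μ - α)) ^ 1) = lam • i β
    rw [pow_one, pow_one,
      show (t + lam • i α) - (t - lam • i (β * ⅟μ - α))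
        = lam • (i α + i (β * ⅟μ - α)) by rw [smul_add]; abel,
      ← map_add, mul_smul_comm, ← map_mul,
      show μ * (α + (β * ⅟μ - α)) = β by
        rw [show α + (β * ⅟μ - α) = β * ⅟μ by ring, show μ * (β * ⅟μ) = β * (μ * ⅟μ) by ring,
          mul_invOf_self, mul_one]]
  · intro n hn
    obtain ⟨m, rfl⟩ : ∃ m, n = m + 1 := ⟨n - 1, (Nat.succ_pred_eq_of_pos hn).symm⟩
    show i μ * ((t + lam • i α) ^ (m + 1) - (t - lam • i (β * ⅟μ - α)) ^ (m + 1))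
      = (t - lam • (1 : R)) * (i μ * ((t + lam • i α) ^ (m + 1 - 1)
          - (t - lam • i (β * ⅟μ - α)) ^ (m + 1 - 1)))
        + lam • i β * (t + lam • i α) ^ (m + 1 - 1)
    set X := t + lam • i α with hX
    set Y := t - lam • i (β * ⅟μ - α) with hY
    simp only [Nat.add_sub_cancel]
    have expand : (t - lam • (1 : R)) * (i μ * (X ^ m - Y ^ m))
        = ((t - lam • (1 : R)) * i μ) * X ^ m - ((t - lam • (1 : R)) * i μ) * Y ^ m := by
      noncomm_ring
    rw [expand]
    nth_rewrite 2 [h2]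
    rw [h1, pow_succ', pow_succ']
    noncomm_ring
end

section
/- Fix γ > 0 and ω ∈ ℝ, and for λ > 0 and r > 0 with r ≠ γ define D(ω, r, λ) := (1/λ²)·(sinh(ωλ) + e^{−ωλ}·(1 − γ/r)·(1 − e^{ωλ} − (γ/r)·log((e^{ωλ}·r − γ)/(r − γ)))), with log the real logarithm. Then for every fixed r > γ, the limit of D(ω, r, λ) as λ → 0⁺ equals ω²/(2·(1 − γ/r)). -/
/-!
Write `h y = exp y - 1 - y`, `a = γ / r` and `g λ = log ((e^{ωλ} r - γ) / (r - γ))`. Since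
`e^g - 1 = (e^{ωλ} - 1) / (1 - a)`, the numerator of `D` rearranges to
`(h (ωλ) + h (-ωλ)) / 2 + a (1 - a) e^{-ωλ} h (g λ)`.
Taylor's formula `h y = y² / 2 + o(y²)` gives `h (f λ) / λ² → f'(0)² / 2` for every `f`
differentiable at `0` with `f 0 = 0`; as `g'(0) = ω / (1 - a)`, the limit is
`ω² / 2 + a ω² / (2 (1 - a)) = ω² / (2 (1 - a))`.
-/

open Filter

/-- The time part `D(ω,r)` of the noncommutative black-hole wave operator
acting on a Fourier mode `e^{iωt}` (Proposition 5.3 of the paper), with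
deformation parameter `lam` (the Planck time). -/
noncomputable def Dfun (γ ω r lam : ℝ) : ℝ :=
  (1 / lam ^ 2) *
    (Real.sinh (ω * lam) +
      Real.exp (-(ω * lam)) * (1 - γ / r) *
        (1 - Real.exp (ω * lam) -
          (γ / r) * Real.log ((Real.exp (ω * lam) * r - γ) / (r - γ))))

open Topology Asymptotics Real

theorem tendsto_exp_sub_one_sub_div_sq {α : Type*} {l : Filter α} {u t : α → ℝ} {c : ℝ}
    (hu : Tendsto u l (𝓝 0)) (ht : ∀ᶠ x in l, t x ≠ 0)
    (hut : Tendsto (fun x => u x / t x) l (𝓝 c)) :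
    Tendsto (fun x => (exp (u x) - 1 - u x) / t x ^ 2) l (𝓝 (c ^ 2 / 2)) := by
  have htaylor : (fun x => exp (u x) - 1 - u x - u x ^ 2 / 2) =o[l] fun x => u x ^ 2 := by
    have := (exp_sub_sum_range_succ_isLittleO_pow 2).comp_tendsto hu
    simpa [Finset.sum_range_succ, Function.comp_def, sub_sub, add_assoc] using this
  have hbig : (fun x => u x ^ 2) =O[l] fun x => t x ^ 2 :=
    (isBigO_of_div_tendsto_nhds (ht.mono fun x hx h => absurd h hx) c hut).pow 2
  have hsum := (htaylor.trans_isBigO hbig).tendsto_div_nhds_zero.add ((hut.pow 2).div_const 2)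
  rw [zero_add] at hsum
  refine hsum.congr' (ht.mono fun x hx => ?_)
  field_simp
  ring

theorem HasDerivAt.tendsto_exp_sub_one_sub_div_sq {f : ℝ → ℝ} {f' : ℝ} (hf : HasDerivAt f f' 0)
    (hf0 : f 0 = 0) :
    Tendsto (fun x => (Real.exp (f x) - 1 - f x) / x ^ 2) (𝓝[≠] 0) (𝓝 (f' ^ 2 / 2)) :=
  _root_.tendsto_exp_sub_one_sub_div_sq
    ((hf.continuousAt.tendsto.mono_left nhdsWithin_le_nhds).trans (by rw [hf0]))
    eventually_mem_nhdsWithin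
    (hf.tendsto_slope_zero.congr' (by simp [hf0, div_eq_inv_mul]))

theorem Dfun_eq_sum_exp_sub_one_sub (γ ω r lam : ℝ) (hr : r ≠ 0) (hrγ : r - γ ≠ 0)
    (hq : 0 < (exp (ω * lam) * r - γ) / (r - γ)) :
    Dfun γ ω r lam =
      (exp (ω * lam) - 1 - ω * lam) / lam ^ 2 / 2 +
        (exp (-ω * lam) - 1 - -ω * lam) / lam ^ 2 / 2 +
        γ / r * (1 - γ / r) * exp (-(ω * lam)) *
          ((exp (log ((exp (ω * lam) * r - γ) / (r - γ))) - 1 -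
            log ((exp (ω * lam) * r - γ) / (r - γ))) / lam ^ 2) := by
  rw [exp_log hq, Dfun, sinh_eq, neg_mul, exp_neg]
  field_simp
  ring

theorem Dfun_classical_limit (γ ω : ℝ) (hγ : 0 < γ) (r : ℝ) (hr : γ < r) :
    Tendsto (fun lam => Dfun γ ω r lam) (nhdsWithin 0 (Set.Ioi 0))
      (nhds (ω ^ 2 / (2 * (1 - γ / r)))) := by
  have hr0 : r ≠ 0 := (hγ.trans hr).ne'
  have hrγ : r - γ ≠ 0 := (sub_pos.mpr hr).ne'
  set q := fun lam : ℝ => (exp (ω * lam) * r - γ) / (r - γ)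
  have hq0 : q 0 = 1 := by simp [q, hrγ]
  have hq : HasDerivAt q (ω * r / (r - γ)) 0 := by
    simpa using (((hasDerivAt_const_mul (x := 0) ω).exp.mul_const r).sub_const γ).div_const (r - γ)
  have hq_pos : ∀ᶠ lam in 𝓝[>] 0, 0 < q lam :=
    (hq.continuousAt.tendsto.mono_left nhdsWithin_le_nhds).eventually
      (eventually_gt_nhds (by simp [hq0]))
  have hexp : Tendsto (fun lam => exp (-(ω * lam))) (𝓝[>] 0) (𝓝 1) := by
    simpa using ((continuous_const_mul ω).neg.rexp.tendsto 0).mono_left nhdsWithin_le_nhds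
  have hlin (c : ℝ) := (HasDerivAt.tendsto_exp_sub_one_sub_div_sq (hasDerivAt_const_mul c)
    (mul_zero c)).mono_left (nhdsGT_le_nhdsNE 0)
  have hlog := ((hq.log (by simp [hq0])).tendsto_exp_sub_one_sub_div_sq
    (by simp [hq0])).mono_left (nhdsGT_le_nhdsNE 0)
  have hlim := (((hlin ω).div_const 2).add ((hlin (-ω)).div_const 2)).add
    ((hexp.const_mul (γ / r * (1 - γ / r))).mul hlog)
  convert hlim.congr' (hq_pos.mono fun lam h =>
    (Dfun_eq_sum_exp_sub_one_sub γ ω r lam hr0 hrγ h).symm) using 2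
  rw [hq0, div_one]
  field_simp
  ring
end

section
/- Fix γ > 0, ω ∈ ℝ and λ > 0, and for r > 0 with r ≠ γ define D(ω, r, λ) := (1/λ²)·(sinh(ωλ) + e^{−ωλ}·(1 − γ/r)·(1 − e^{ωλ} − (γ/r)·log((e^{ωλ}·r − γ)/(r − γ)))), with log the real logarithm. Then the limit of D(ω, r, λ) as r → ∞ equals (cosh(ωλ) − 1)/λ². -/
/-! As `r → ∞`, `γ / r → 0` while the argument of the logarithm tends to `e^{ωλ}`, so the
logarithm stays bounded and its term is killed by the factor `γ / r`. What survives is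
`sinh(ωλ) + e^{-ωλ} (1 - e^{ωλ}) = cosh(ωλ) - 1`. -/

open Filter Topology

namespace Real

theorem sinh_add_exp_neg_mul_one_sub_exp (x : ℝ) :
    sinh x + exp (-x) * (1 - exp x) = cosh x - 1 := by
  rw [sinh_eq, cosh_eq, mul_sub, mul_one, ← exp_add, neg_add_cancel, exp_zero]
  ring

end Real

theorem tendsto_mul_sub_div_sub_atTop (c γ : ℝ) :
    Tendsto (fun r : ℝ => (c * r - γ) / (r - γ)) atTop (𝓝 c) := by
  have hγr : Tendsto (fun r : ℝ => γ / r) atTop (𝓝 0) :=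
    tendsto_const_nhds.div_atTop tendsto_id
  have h := (tendsto_const_nhds (x := c)).sub hγr |>.div
    ((tendsto_const_nhds (x := (1 : ℝ))).sub hγr) (by norm_num)
  rw [sub_zero, sub_zero, div_one] at h
  refine h.congr' ?_
  filter_upwards [eventually_gt_atTop 0] with r hr
  simp only [Pi.div_apply]
  field_simp

theorem tendsto_log_mul_sub_div_sub_atTop {c : ℝ} (hc : c ≠ 0) (γ : ℝ) :
    Tendsto (fun r : ℝ => Real.log ((c * r - γ) / (r - γ))) atTop (𝓝 (Real.log c)) :=
  (Real.continuousAt_log hc).tendsto.comp (tendsto_mul_sub_div_sub_atTop c γ)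

theorem Dfun_limit_at_infinity_general (γ ω lam : ℝ) :
    Tendsto (fun r => Dfun γ ω r lam) atTop
      (nhds ((Real.cosh (ω * lam) - 1) / lam ^ 2)) := by
  set a := ω * lam
  have hγr : Tendsto (fun r : ℝ => γ / r) atTop (𝓝 0) :=
    tendsto_const_nhds.div_atTop tendsto_id
  have hlog := tendsto_log_mul_sub_div_sub_atTop (Real.exp_ne_zero a) γ
  rw [Real.log_exp] at hlog
  have hD : Tendsto (fun r => Dfun γ ω r lam) atTop
      (𝓝 ((1 / lam ^ 2) * (Real.sinh a + Real.exp (-a) * (1 - 0) * (1 - Real.exp a - 0 * a)))) :=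
    tendsto_const_nhds.mul <| tendsto_const_nhds.add <|
      (tendsto_const_nhds.mul (tendsto_const_nhds.sub hγr)).mul
        (tendsto_const_nhds.sub (hγr.mul hlog))
  rwa [sub_zero, mul_one, zero_mul, sub_zero, Real.sinh_add_exp_neg_mul_one_sub_exp,
    one_div_mul_eq_div] at hD

theorem Dfun_limit_at_infinity (γ ω lam : ℝ) (hγ : 0 < γ) (hlam : 0 < lam) :
    Tendsto (fun r => Dfun γ ω r lam) atTop
      (nhds ((Real.cosh (ω * lam) - 1) / lam ^ 2)) :=
  Dfun_limit_at_infinity_general γ ω lam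
end

section
/- Fix γ > 0, ω > 0 and λ > 0, and for r > γ define D(ω, r, λ) := (1/λ²)·(sinh(ωλ) + e^{−ωλ}·(1 − γ/r)·(1 − e^{ωλ} − (γ/r)·log((e^{ωλ}·r − γ)/(r − γ)))), with log the real logarithm. Then the limit of D(ω, r, λ) as r → γ from the right equals sinh(ωλ)/λ². -/
open Filter

/-!
In the variable `s = γ / r` the logarithmic term of `D` is, up to the bounded factor `s`,
`(1 - s) · log ((E - s) / (1 - s))` with `E = exp (ωλ) ≠ 1`. This is `u log (f / u)` with `u → 0` and `f → E - 1 ≠ 0`, and it tends to `0`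
because `u log (f / u) = u log f - u log u` and `x log x` is continuous with value `0` at `0`.
So the whole correction to `sinh (ωλ)` vanishes at the horizon, even as a two-sided limit.
-/

open Topology Real

theorem Filter.Tendsto.mul_log_div_of_ne_zero {α : Type*} {l : Filter α} {f u : α → ℝ} {c : ℝ}
    (hf : Tendsto f l (𝓝 c)) (hc : c ≠ 0) (hu : Tendsto u l (𝓝 0)) :
    Tendsto (fun x => u x * Real.log (f x / u x)) l (𝓝 0) := by
  have hlim : Tendsto (fun x => u x * Real.log (f x) - u x * Real.log (u x)) l
      (𝓝 (0 * Real.log c - 0)) :=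
    (hu.mul (hf.log hc)).sub ((continuous_mul_log.tendsto' 0 0 (by simp)).comp hu)
  rw [zero_mul, sub_zero] at hlim
  refine hlim.congr' ?_
  filter_upwards [hf.eventually_ne hc] with x hfx
  rcases eq_or_ne (u x) 0 with hux | hux
  · simp [hux]
  · rw [log_div hfx hux]
    ring

/-- The factor multiplying `exp (-(ω * lam))` in `Dfun`, as a function of `E = exp (ω * lam)` and
`s = γ / r`. -/
noncomputable def horizonFactor (E s : ℝ) : ℝ :=
  (1 - s) * (1 - E - s * log ((E - s) / (1 - s)))

theorem tendsto_horizonFactor_one {E : ℝ} (hE : E ≠ 1) :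
    Tendsto (horizonFactor E) (𝓝 1) (𝓝 0) := by
  have hu : Tendsto (fun s : ℝ => 1 - s) (𝓝 1) (𝓝 0) := by
    simpa using (show Continuous fun s : ℝ => 1 - s by fun_prop).tendsto 1
  have hf : Tendsto (fun s : ℝ => E - s) (𝓝 1) (𝓝 (E - 1)) :=
    (show Continuous fun s : ℝ => E - s by fun_prop).tendsto 1
  have hlog := hf.mul_log_div_of_ne_zero (sub_ne_zero.mpr hE) hu
  have hlim := (hu.mul_const (1 - E)).sub (tendsto_id.mul hlog)
  rw [zero_mul, mul_zero, sub_zero] at hlim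
  refine hlim.congr fun s => ?_
  simp only [horizonFactor, id]
  ring

theorem Dfun_eq_horizonFactor (γ ω lam : ℝ) {r : ℝ} (hr : r ≠ 0) :
    Dfun γ ω r lam =
      1 / lam ^ 2 * (sinh (ω * lam) + exp (-(ω * lam)) * horizonFactor (exp (ω * lam)) (γ / r)) := by
  have hquot : (exp (ω * lam) * r - γ) / (r - γ) = (exp (ω * lam) - γ / r) / (1 - γ / r) := by
    rw [eq_comm, ← mul_div_mul_right _ _ hr, sub_mul, sub_mul, div_mul_cancel₀ _ hr, one_mul]
  rw [Dfun, hquot, horizonFactor]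
  ring

theorem tendsto_Dfun_nhds {γ ω lam : ℝ} (hγ : γ ≠ 0) (hωlam : ω * lam ≠ 0) :
    Tendsto (fun r => Dfun γ ω r lam) (𝓝 γ) (𝓝 (sinh (ω * lam) / lam ^ 2)) := by
  have hE : exp (ω * lam) ≠ 1 := fun h => hωlam (exp_eq_one_iff _ |>.mp h)
  have hs : Tendsto (fun r => γ / r) (𝓝 γ) (𝓝 1) := by
    simpa [hγ] using (show ContinuousAt (fun r : ℝ => γ / r) γ by fun_prop (disch := exact hγ)).tendsto
  have hlim := (((tendsto_horizonFactor_one hE).comp hs).const_mul (exp (-(ω * lam)))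
    |>.const_add (sinh (ω * lam))).const_mul (1 / lam ^ 2)
  rw [mul_zero, add_zero, one_div_mul_eq_div] at hlim
  refine hlim.congr' ?_
  filter_upwards [tendsto_id.eventually_ne hγ] with r hr
  exact (Dfun_eq_horizonFactor γ ω lam hr).symm

theorem Dfun_limit_at_horizon (γ ω lam : ℝ) (hγ : 0 < γ) (hω : 0 < ω)
    (hlam : 0 < lam) :
    Tendsto (fun r => Dfun γ ω r lam) (nhdsWithin γ (Set.Ioi γ))
      (nhds (Real.sinh (ω * lam) / lam ^ 2)) :=
  (tendsto_Dfun_nhds hγ.ne' (mul_pos hω hlam).ne').mono_left nhdsWithin_le_nhds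
end

section
/- Fix γ > 0, ω > 0 and λ > 0, and for 0 < r < γ·e^{−ωλ} define D(ω, r, λ) := (1/λ²)·(sinh(ωλ) + e^{−ωλ}·(1 − γ/r)·(1 − e^{ωλ} − (γ/r)·log((e^{ωλ}·r − γ)/(r − γ)))), with log the real logarithm (the argument of the logarithm is positive on this range). Then the limit of D(ω, r, λ)/r as r → 0 from the right equals −(cosh(ωλ) − 1)·(1 + 2·e^{ωλ})/(3·λ²·γ). -/
open Filter

open Real Asymptotics Topology Finset

/- With `a = e^{ωλ}` and `x = r/γ` the logarithm in `D` is `log (1 - a x) - log (1 - x)`.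
Inserting the third-order Taylor polynomial of `log (1 - t)`, the constant term of `λ² D`
is `sinh (ωλ) - e^{-ωλ} (a² - 1)/2 = 0`, the linear term is
`e^{-ωλ} ((a² - 1)/2 - (a³ - 1)/3) x`, and the Taylor remainders are `O(x⁴)`, hence
contribute `O(x)` to `D / r`. -/

noncomputable def logOneSubTaylorRemainder (n : ℕ) (t : ℝ) : ℝ :=
  log (1 - t) + ∑ i ∈ range n, t ^ (i + 1) / (i + 1)

lemma logOneSubTaylorRemainder_isBigO (n : ℕ) :
    logOneSubTaylorRemainder n =O[𝓝 0] (· ^ (n + 1)) := by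
  refine IsBigO.of_bound 2 ?_
  filter_upwards [Metric.ball_mem_nhds (0 : ℝ) (by norm_num : (0 : ℝ) < 1 / 2)] with t ht
  rw [Metric.mem_ball, dist_zero_right, norm_eq_abs] at ht
  have hpos : (0 : ℝ) < 1 - |t| := by linarith
  calc ‖logOneSubTaylorRemainder n t‖ ≤ |t| ^ (n + 1) / (1 - |t|) := by
        rw [logOneSubTaylorRemainder, add_comm, norm_eq_abs]
        exact abs_log_sub_add_sum_range_le (by linarith) n
    _ ≤ 2 * ‖t ^ (n + 1)‖ := by
        rw [div_le_iff₀ hpos, norm_pow, norm_eq_abs]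
        nlinarith [pow_nonneg (abs_nonneg t) (n + 1)]

lemma tendsto_logOneSubTaylorRemainder_sub_div_pow (n : ℕ) (a : ℝ) :
    Tendsto (fun x => (logOneSubTaylorRemainder n (a * x) - logOneSubTaylorRemainder n x) / x ^ n)
      (𝓝 0) (𝓝 0) := by
  have hscaled : (fun x => logOneSubTaylorRemainder n (a * x)) =O[𝓝 0] (· ^ (n + 1)) := by
    have hlim : Tendsto (a * ·) (𝓝 (0 : ℝ)) (𝓝 0) := by
      simpa using (continuous_const_mul a).tendsto 0
    refine ((logOneSubTaylorRemainder_isBigO n).comp_tendsto hlim).trans ?_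
    simpa only [Function.comp_def, mul_pow] using isBigO_const_mul_self (a ^ (n + 1)) _ _
  exact ((hscaled.sub (logOneSubTaylorRemainder_isBigO n)).trans_isLittleO
    (isLittleO_pow_pow n.lt_succ_self)).tendsto_div_nhds_zero

lemma Dfun_div_eq {γ r : ℝ} (ω lam : ℝ) (hγ : γ ≠ 0) (hr : r ≠ 0) (hx : r / γ < 1)
    (hax : exp (ω * lam) * (r / γ) < 1) :
    Dfun γ ω r lam / r =
      ((exp (ω * lam) ^ 2 - 1) / 2 - (exp (ω * lam) ^ 3 - 1) / 3
        + (exp (ω * lam) ^ 3 - 1) / 3 * (r / γ)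
        + (1 - r / γ) * ((logOneSubTaylorRemainder 3 (exp (ω * lam) * (r / γ))
            - logOneSubTaylorRemainder 3 (r / γ)) / (r / γ) ^ 3))
        / (exp (ω * lam) * γ) / lam ^ 2 := by
  obtain ⟨x, rfl⟩ : ∃ x, r = γ * x := ⟨r / γ, by field_simp⟩
  rw [mul_div_cancel_left₀ x hγ] at *
  have hx0 : x ≠ 0 := right_ne_zero_of_mul hr
  have h1x : 1 - x ≠ 0 := (sub_pos.2 hx).ne'
  have h1ax : 1 - exp (ω * lam) * x ≠ 0 := (sub_pos.2 hax).ne'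
  have hlog : log ((exp (ω * lam) * (γ * x) - γ) / (γ * x - γ)) =
      log (1 - exp (ω * lam) * x) - log (1 - x) := by
    have hγx : γ * x - γ ≠ 0 := by
      rw [← mul_sub_one]
      exact mul_ne_zero hγ (sub_ne_zero.2 hx.ne)
    rw [← log_div h1ax h1x]
    congr 1
    rw [div_eq_div_iff hγx h1x]
    ring
  rw [Dfun, one_div_mul_eq_div, div_right_comm, hlog, sinh_eq, exp_neg]
  congr 1
  simp only [logOneSubTaylorRemainder, sum_range_succ, sum_range_zero]
  have ha : exp (ω * lam) ≠ 0 := (exp_pos _).ne'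
  -- keeps `field_simp` from rewriting inside the logarithms
  generalize log (1 - exp (ω * lam) * x) = L₁
  generalize log (1 - x) = L₂
  field_simp
  ring

lemma exp_sq_sub_exp_cube_div_eq_neg_cosh (γ t lam : ℝ) (hγ : γ ≠ 0) :
    ((exp t ^ 2 - 1) / 2 - (exp t ^ 3 - 1) / 3) / (exp t * γ) / lam ^ 2 =
      -((cosh t - 1) * (1 + 2 * exp t)) / (3 * lam ^ 2 * γ) := by
  have hlam_free : ((exp t ^ 2 - 1) / 2 - (exp t ^ 3 - 1) / 3) / (exp t * γ) =
      -((cosh t - 1) * (1 + 2 * exp t)) / (3 * γ) := by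
    rw [cosh_eq, exp_neg]
    field_simp
    ring
  rw [hlam_free]
  ring

theorem Dfun_limit_at_origin_general (γ ω lam : ℝ) (hγ : 0 < γ) :
    Tendsto (fun r => Dfun γ ω r lam / r)
      (nhdsWithin 0 (Set.Ioo 0 (γ * Real.exp (-(ω * lam)))))
      (nhds (-((Real.cosh (ω * lam) - 1) * (1 + 2 * Real.exp (ω * lam)))
        / (3 * lam ^ 2 * γ))) := by
  set l := 𝓝[Set.Ioo 0 (γ * exp (-(ω * lam)))] (0 : ℝ)
  set a := exp (ω * lam)
  have hx : Tendsto (· / γ) l (𝓝 0) := by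
    simpa using ((continuous_id.div_const γ).tendsto 0).mono_left nhdsWithin_le_nhds
  have hax : Tendsto (fun r => a * (r / γ)) l (𝓝 0) := by simpa using hx.const_mul a
  have hR := (tendsto_logOneSubTaylorRemainder_sub_div_pow 3 a).comp hx
  have hlim := ((((tendsto_const_nhds (x := (a ^ 2 - 1) / 2 - (a ^ 3 - 1) / 3)).add
    (hx.const_mul ((a ^ 3 - 1) / 3))).add
    ((tendsto_const_nhds (x := (1 : ℝ)).sub hx).mul hR)).div_const (a * γ)).div_const (lam ^ 2)
  rw [← exp_sq_sub_exp_cube_div_eq_neg_cosh γ (ω * lam) lam hγ.ne']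
  refine (by simpa using hlim : Tendsto _ l _).congr' ?_
  filter_upwards [eventually_mem_nhdsWithin, hx.eventually (eventually_lt_nhds one_pos),
    hax.eventually (eventually_lt_nhds one_pos)] with r hr hr_lt hav_lt
  exact (Dfun_div_eq ω lam hγ.ne' hr.1.ne' hr_lt hav_lt).symm

theorem Dfun_limit_at_origin (γ ω lam : ℝ) (hγ : 0 < γ) (hω : 0 < ω)
    (hlam : 0 < lam) :
    Tendsto (fun r => Dfun γ ω r lam / r)
      (nhdsWithin 0 (Set.Ioo 0 (γ * Real.exp (-(ω * lam)))))
      (nhds (-((Real.cosh (ω * lam) - 1) * (1 + 2 * Real.exp (ω * lam)))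
        / (3 * lam ^ 2 * γ))) :=
  Dfun_limit_at_origin_general γ ω lam hγ
end

section
/- Fix γ > 0, ω ∈ ℝ and λ > 0, and let 0 < r < γ·e^{−ωλ} with r < γ. Define D(ω, r, λ) := (1/λ²)·(sinh(ωλ) + e^{−ωλ}·(1 − γ/r)·(1 − e^{ωλ} − (γ/r)·log((e^{ωλ}·r − γ)/(r − γ)))), with log the real logarithm (the argument of the logarithm is positive on this range). Then the series Σ_{m=1}^∞ (r/γ)^m·(e^{(m+1)ωλ}/(m+2) − e^{mωλ}/(m+1) + e^{−ωλ}/((m+1)(m+2))) converges and its sum equals −λ²·D(ω, r, λ). -/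
/-!
Put x = r/γ, E = e^{ωλ} and y = xE; the hypotheses give 0 < x, y < 1. Splitting
1/((m+2)(m+3)) = 1/(m+2) − 1/(m+3), the m-th term becomes
E·y^{m+1}/(m+3) − y^{m+1}/(m+2) + E⁻¹·(x^{m+1}/(m+2) − x^{m+1}/(m+3)),
and each of the four series is a tail of −log(1 − t) = Σ t^{n+1}/(n+1), divided by a power
of t. Collecting terms, the logarithms combine into log((1 − y)/(1 − x)), which is the
logarithm of (e^{ωλ}r − γ)/(r − γ) occurring in D.
-/

open Finset

-- At `t = 0` the right-hand side is `0 / 0 = 0`, matching the vanishing series.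
lemma Real.hasSum_pow_div_nat_add_of_abs_lt_one (k : ℕ) {t : ℝ} (ht : |t| < 1) :
    HasSum (fun n : ℕ => t ^ (n + 1) / ((n : ℝ) + k + 1))
      ((-Real.log (1 - t) - ∑ i ∈ range k, t ^ (i + 1) / ((i : ℝ) + 1)) / t ^ k) := by
  rcases eq_or_ne t 0 with rfl | ht0
  · simp
  have h := ((hasSum_nat_add_iff' k).mpr
    (Real.hasSum_pow_div_log_of_abs_lt_one ht)).div_const (t ^ k)
  refine h.congr_fun fun n => ?_
  simp only [Nat.cast_add]
  field_simp
  ring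

lemma Real.hasSum_pow_div_add_two_of_abs_lt_one {t : ℝ} (ht : |t| < 1) :
    HasSum (fun n : ℕ => t ^ (n + 1) / ((n : ℝ) + 2)) ((-Real.log (1 - t) - t) / t) := by
  convert Real.hasSum_pow_div_nat_add_of_abs_lt_one 1 ht using 1
  · norm_num [add_assoc, one_add_one_eq_two]
  · norm_num

lemma Real.hasSum_pow_div_add_three_of_abs_lt_one {t : ℝ} (ht : |t| < 1) :
    HasSum (fun n : ℕ => t ^ (n + 1) / ((n : ℝ) + 3))
      ((-Real.log (1 - t) - t - t ^ 2 / 2) / t ^ 2) := by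
  convert Real.hasSum_pow_div_nat_add_of_abs_lt_one 2 ht using 1
  · norm_num [add_assoc]
  · norm_num [sum_range_succ, sub_sub]

theorem hasSum_interior_series {x E : ℝ} (hx0 : x ≠ 0) (hE : E ≠ 0) (hx : |x| < 1)
    (hxE : |x * E| < 1) :
    HasSum
      (fun m : ℕ => x ^ (m + 1) *
        (E ^ (m + 2) / ((m : ℝ) + 3) - E ^ (m + 1) / ((m : ℝ) + 2)
          + E⁻¹ / (((m : ℝ) + 2) * ((m : ℝ) + 3))))
      (-((E - E⁻¹) / 2 + E⁻¹ * (1 - x⁻¹) *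
        (1 - E - x⁻¹ * (Real.log (1 - x * E) - Real.log (1 - x))))) := by
  have h := (((Real.hasSum_pow_div_add_three_of_abs_lt_one hxE).mul_left E).sub
    (Real.hasSum_pow_div_add_two_of_abs_lt_one hxE)).add
      (((Real.hasSum_pow_div_add_two_of_abs_lt_one hx).sub
        (Real.hasSum_pow_div_add_three_of_abs_lt_one hx)).mul_left E⁻¹)
  have hsum : -((E - E⁻¹) / 2 + E⁻¹ * (1 - x⁻¹) *
        (1 - E - x⁻¹ * (Real.log (1 - x * E) - Real.log (1 - x)))) =
      E * ((-Real.log (1 - x * E) - x * E - (x * E) ^ 2 / 2) / (x * E) ^ 2)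
        - (-Real.log (1 - x * E) - x * E) / (x * E)
        + E⁻¹ * ((-Real.log (1 - x) - x) / x - (-Real.log (1 - x) - x - x ^ 2 / 2) / x ^ 2) := by
    field_simp
    ring
  rw [hsum]
  refine h.congr_fun fun m => ?_
  have : ((m : ℝ) + 2) ≠ 0 := by positivity
  have : ((m : ℝ) + 3) ≠ 0 := by positivity
  field_simp
  ring

theorem Dfun_interior_series (γ ω lam r : ℝ) (hγ : 0 < γ) (hlam : 0 < lam)
    (hr0 : 0 < r) (hr1 : r < γ * Real.exp (-(ω * lam))) (hr2 : r < γ) :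
    HasSum
      (fun m : ℕ =>
        (r / γ) ^ (m + 1) *
          (Real.exp (((m : ℝ) + 2) * (ω * lam)) / ((m : ℝ) + 3)
            - Real.exp (((m : ℝ) + 1) * (ω * lam)) / ((m : ℝ) + 2)
            + Real.exp (-(ω * lam)) / (((m : ℝ) + 2) * ((m : ℝ) + 3))))
      (-(lam ^ 2) * Dfun γ ω r lam) := by
  set E := Real.exp (ω * lam) with hE
  have hx : r / γ < 1 := (div_lt_one hγ).mpr hr2
  have hxE : r / γ * E < 1 := by
    rw [div_mul_eq_mul_div, div_lt_one hγ, ← lt_div_iff₀ (Real.exp_pos _), div_eq_mul_inv,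
      ← Real.exp_neg]
    exact hr1
  have hlog : Real.log ((E * r - γ) / (r - γ)) =
      Real.log (1 - r / γ * E) - Real.log (1 - r / γ) := by
    have : r - γ ≠ 0 := by linarith
    have : γ - r ≠ 0 := by linarith
    rw [← Real.log_div (by linarith) (by linarith)]
    congr 1
    field_simp
    ring
  convert hasSum_interior_series (x := r / γ) (E := E) (by positivity) (Real.exp_pos _).ne'
    (by rwa [abs_of_pos (by positivity)]) (by rwa [abs_of_pos (by positivity)]) using 1
  · funext m
    simp only [← Real.exp_nat_mul, Real.exp_neg, E]
    push_cast
    rfl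
  · have : lam ≠ 0 := hlam.ne'
    rw [Dfun, Real.sinh_eq, hlog, Real.exp_neg, ← hE]
    field_simp
end

section
/- Fix γ > 0, ω ∈ ℝ with ω ≠ 0, and r > γ, and for λ > 0 define D(ω, r, λ) := (1/λ²)·(sinh(ωλ) + e^{−ωλ}·(1 − γ/r)·(1 − e^{ωλ} − (γ/r)·log((e^{ωλ}·r − γ)/(r − γ)))), with log the real logarithm. Then the limit as λ → 0⁺ of (2·D(ω, r, λ)·(1 − γ/r)/ω² − 1)/λ equals −(2/3)·ω·(γ/r)/(1 − γ/r). -/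
/-!
With `x = ωλ` and `g = γ/r`, `λ²·D = F(x)` depends on `x` and `g` only, and the limit is `ω` times
the `x³`-coefficient of `2(1 - g)F(x) - x²`. Multiplying by `eˣ` turns `2(1 - g)F(x) - x²` into a
function whose derivative `eˣ·(2(1 - g)eˣ(eˣ - 1)/(eˣ - g) - 2x - x²)` is free of logarithms; one
application of l'Hôpital's rule reduces the claim to the limit of that bracket over `x²`, which
follows from `(eˣ - 1)/x → 1` and `(eˣ - 1 - x)/x² → 1/2`.
-/

open Filter

open Topology Real

namespace Real

theorem tendsto_exp_sub_one_div :
    Tendsto (fun x => (exp x - 1) / x) (𝓝[≠] 0) (𝓝 1) := by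
  simpa [div_eq_inv_mul] using (hasDerivAt_exp 0).tendsto_slope_zero

theorem tendsto_exp_sub_one_sub_div_sq :
    Tendsto (fun x => (exp x - 1 - x) / x ^ 2) (𝓝[≠] 0) (𝓝 (1 / 2)) := by
  refine HasDerivAt.lhopital_zero_nhdsNE (f' := fun x => exp x - 1) (g' := fun x => 2 * x)
    (.of_forall fun x => ((hasDerivAt_exp x).sub_const 1).sub (hasDerivAt_id x))
    (.of_forall fun x => by simpa using hasDerivAt_pow 2 x)
    (eventually_mem_nhdsWithin.mono fun x hx => mul_ne_zero two_ne_zero hx) ?_ ?_ ?_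
  · exact tendsto_nhdsWithin_of_tendsto_nhds
      ((by fun_prop : Continuous fun x => exp x - 1 - x).tendsto' 0 0 (by simp))
  · exact tendsto_nhdsWithin_of_tendsto_nhds
      ((continuous_pow 2).tendsto' (0 : ℝ) 0 (by simp))
  · exact (tendsto_exp_sub_one_div.div_const 2).congr fun x => by ring

theorem eventually_exp_ne_nhds_zero {g : ℝ} (hg : g ≠ 1) : ∀ᶠ x in 𝓝 0, exp x ≠ g :=
  continuous_exp.continuousAt.eventually_ne (by rwa [exp_zero, ne_comm])

end Real

/-- With `x = ωλ` and `g = γ/r` this is `eˣ·(2(1 - g)·λ²·D - x²)`. -/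
noncomputable def redshiftDefect (g x : ℝ) : ℝ :=
  (1 - g) * (exp x ^ 2 - 1) + 2 * (1 - g) ^ 2 * (1 - exp x)
    - 2 * (1 - g) ^ 2 * g * log ((exp x - g) / (1 - g)) - x ^ 2 * exp x

theorem hasDerivAt_redshiftDefect {g x : ℝ} (hg : g ≠ 1) (hx : exp x ≠ g) :
    HasDerivAt (redshiftDefect g)
      (exp x * (2 * (1 - g) * exp x * (exp x - 1) / (exp x - g) - 2 * x - x ^ 2)) x := by
  have hv : exp x - g ≠ 0 := sub_ne_zero.mpr hx
  have ha : 1 - g ≠ 0 := sub_ne_zero.mpr hg.symm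
  have hlog := (((hasDerivAt_exp x).sub_const g).div_const (1 - g)).log (div_ne_zero hv ha)
  have h : HasDerivAt (redshiftDefect g) _ x :=
    (((((hasDerivAt_exp x).pow 2).sub_const 1).const_mul (1 - g)).add
      (((hasDerivAt_exp x).const_sub 1).const_mul (2 * (1 - g) ^ 2))).sub
      (hlog.const_mul (2 * (1 - g) ^ 2 * g)) |>.sub
      ((hasDerivAt_pow 2 x).mul (hasDerivAt_exp x))
  refine h.congr_deriv ?_
  field_simp
  ring

theorem tendsto_redshiftDefect_deriv_div_sq {g : ℝ} (hg : g ≠ 1) :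
    Tendsto (fun x => (2 * (1 - g) * exp x * (exp x - 1) / (exp x - g) - 2 * x - x ^ 2) / x ^ 2)
      (𝓝[≠] 0) (𝓝 (-2 * g / (1 - g))) := by
  have hexp : Tendsto (fun x => exp x / (exp x - g)) (𝓝[≠] 0) (𝓝 (1 / (1 - g))) := by
    refine tendsto_nhdsWithin_of_tendsto_nhds (ContinuousAt.tendsto ?_ |>.trans_eq (by simp))
    exact continuous_exp.continuousAt.div (by fun_prop) (by rwa [exp_zero, sub_ne_zero, ne_comm])
  have hlim := ((tendsto_exp_sub_one_sub_div_sq.const_mul 2).add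
    ((tendsto_exp_sub_one_div.pow 2).const_mul 2)).sub_const 1 |>.sub
    (((tendsto_exp_sub_one_div.pow 2).const_mul 2).mul hexp)
  refine (hlim.congr' ?_).trans_eq (by congr 1; field_simp [sub_ne_zero.mpr hg.symm]; ring)
  -- with `y = eˣ - 1`: `2(1 - g)eˣy/(eˣ - g) = 2y + 2y² - 2eˣy²/(eˣ - g)`
  filter_upwards [self_mem_nhdsWithin,
    (eventually_exp_ne_nhds_zero hg).filter_mono nhdsWithin_le_nhds] with x (hx : x ≠ 0) hxg
  have hv : exp x - g ≠ 0 := sub_ne_zero.mpr hxg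
  field_simp
  ring

theorem tendsto_redshiftDefect_div_cube {g : ℝ} (hg : g ≠ 1) :
    Tendsto (fun x => redshiftDefect g x / x ^ 3) (𝓝[≠] 0) (𝓝 (-(2 / 3) * (g / (1 - g)))) := by
  have hne : ∀ᶠ x in 𝓝[≠] 0, exp x ≠ g :=
    (eventually_exp_ne_nhds_zero hg).filter_mono nhdsWithin_le_nhds
  have hzero : redshiftDefect g 0 = 0 := by
    simp [redshiftDefect, div_self (sub_ne_zero.mpr hg.symm)]
  refine HasDerivAt.lhopital_zero_nhdsNE (hne.mono fun x hx => hasDerivAt_redshiftDefect hg hx)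
    (.of_forall fun x => hasDerivAt_pow 3 x)
    (eventually_mem_nhdsWithin.mono fun x (hx : x ≠ 0) => by positivity) ?_ ?_ ?_
  · refine tendsto_nhdsWithin_of_tendsto_nhds ?_
    exact (hasDerivAt_redshiftDefect hg (by rwa [exp_zero, ne_comm])).continuousAt.tendsto.trans_eq
      (congrArg 𝓝 hzero)
  · exact tendsto_nhdsWithin_of_tendsto_nhds ((continuous_pow 3).tendsto' (0 : ℝ) 0 (by simp))
  · have hexp : Tendsto exp (𝓝[≠] 0) (𝓝 1) :=
      tendsto_nhdsWithin_of_tendsto_nhds (continuous_exp.tendsto' 0 1 exp_zero)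
    refine ((hexp.mul (tendsto_redshiftDefect_deriv_div_sq hg)).div_const 3).congr' ?_ |>.trans_eq
      (by congr 1; ring)
    filter_upwards [self_mem_nhdsWithin] with x (hx : x ≠ 0)
    field_simp
    ring

theorem Dfun_redshift_ratio_eq {γ ω r lam : ℝ} (hω : ω ≠ 0) (hlam : lam ≠ 0) :
    (2 * Dfun γ ω r lam * (1 - γ / r) / ω ^ 2 - 1) / lam =
      ω * (exp (-(ω * lam)) * (redshiftDefect (γ / r) (ω * lam) / (ω * lam) ^ 3)) := by
  have hlog : γ / r * log ((exp (ω * lam) * r - γ) / (r - γ)) =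
      γ / r * log ((exp (ω * lam) - γ / r) / (1 - γ / r)) := by
    rcases eq_or_ne r 0 with rfl | hr
    · simp -- `γ / 0 = 0` kills both sides
    · congr 2
      field_simp
  unfold Dfun redshiftDefect
  rw [hlog, sinh_eq, exp_neg]
  field_simp
  ring

theorem Dfun_first_order_redshift_expansion_general (γ ω r : ℝ)
    (hω : ω ≠ 0) (hr : γ < r) :
    Tendsto
      (fun lam => (2 * Dfun γ ω r lam * (1 - γ / r) / ω ^ 2 - 1) / lam)
      (nhdsWithin 0 (Set.Ioi 0))
      (nhds (-(2 / 3) * ω * (γ / r) / (1 - γ / r))) := by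
  have hg : γ / r ≠ 1 := by
    rcases eq_or_ne r 0 with rfl | hr0
    · simp
    · exact (div_eq_one_iff_eq hr0).not.mpr hr.ne
  have hscale : Tendsto (fun lam => ω * lam) (𝓝[>] 0) (𝓝[≠] 0) :=
    tendsto_nhdsWithin_of_tendsto_nhds_of_eventually_within _
      ((continuous_const_mul ω).tendsto' 0 0 (mul_zero ω) |>.mono_left nhdsWithin_le_nhds)
      (eventually_mem_nhdsWithin.mono fun lam (hlam : 0 < lam) => mul_ne_zero hω hlam.ne')
  have hexp : Tendsto (fun lam => exp (-(ω * lam))) (𝓝[>] 0) (𝓝 1) :=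
    tendsto_nhdsWithin_of_tendsto_nhds
      ((by fun_prop : Continuous fun lam => exp (-(ω * lam))).tendsto' 0 1 (by simp))
  refine ((hexp.mul ((tendsto_redshiftDefect_div_cube hg).comp hscale)).const_mul ω).congr' ?_
    |>.trans_eq (by congr 1; ring)
  filter_upwards [self_mem_nhdsWithin] with lam (hlam : 0 < lam)
  exact (Dfun_redshift_ratio_eq hω hlam.ne').symm

theorem Dfun_first_order_redshift_expansion (γ ω r : ℝ) (hγ : 0 < γ)
    (hω : ω ≠ 0) (hr : γ < r) :
    Tendsto
      (fun lam => (2 * Dfun γ ω r lam * (1 - γ / r) / ω ^ 2 - 1) / lam)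
      (nhdsWithin 0 (Set.Ioi 0))
      (nhds (-(2 / 3) * ω * (γ / r) / (1 - γ / r))) :=
  Dfun_first_order_redshift_expansion_general γ ω r hω hr
end
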